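/- arXiv:1807.03918 — 2 statements merged into one kernel-verified Lean document; each statement's English description precedes it below -/
import Mathlib

section
/- For all positive reals m, n, y, one has 2mny^2 / (1 + (m+n)y - sqrt((1+(m+n)y)^2 - 4mny^2)) > 1; that is, the dominant root α₁(y) of the characteristic polynomial exceeds 1. -/
theorem stmt3 (m n y : ℝ) (hm : 0 < m) (hn : 0 < n) (hy : 0 < y) :
    2 * m * n * y ^ 2 /
      (1 + (m + n) * y - Real.sqrt ((1 + (m + n) * y) ^ 2 - 4 * m * n * y ^ 2)) > 1 := by
  set S : ℝ := 1 + (m + n) * y with hS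
  have hSpos : 0 < S := by positivity
  have hpos : 0 < S ^ 2 - 4 * m * n * y ^ 2 := by
    nlinarith [sq_nonneg ((m - n) * y), mul_pos (mul_pos hm hn) (pow_pos hy 2)]
  set t : ℝ := Real.sqrt (S ^ 2 - 4 * m * n * y ^ 2) with htdef
  have ht0 : 0 < t := Real.sqrt_pos.mpr hpos
  have ht2 : t ^ 2 = S ^ 2 - 4 * m * n * y ^ 2 := Real.sq_sqrt hpos.le
  have htS : t < S := by
    nlinarith [mul_pos hm hn, sq_nonneg y, mul_pos (mul_pos hm hn) (pow_pos hy 2)]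
  have hD : 0 < S - t := by linarith
  have key : 2 < S + t := by
    by_cases h2 : 2 ≤ S
    · linarith
    · push_neg at h2
      have hmn : m * n * y ^ 2 < (m + n) * y := by
        nlinarith [sq_nonneg ((m - n) * y), mul_pos (mul_pos hm hn) (pow_pos hy 2)]
      have : (2 - S) ^ 2 < t ^ 2 := by nlinarith
      nlinarith
  rw [gt_iff_lt, lt_div_iff₀ hD]
  nlinarith [mul_pos hD (by linarith : (0:ℝ) < S + t - 2)]
end

section
/- Let m, n be positive integers and set β = sqrt((1+m+n)^2 - 4mn). Define α₁(y) = 2mny^2/(1 + (m+n)y - sqrt((1+(m+n)y)^2 - 4mny^2)) for y near 1. Then α₁'(1)/α₁(1) = (β - 1)/β. -/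
lemma aux (s p β : ℝ) (hp : 0 < p) (hβpos : 0 < β)
    (hβ2 : β ^ 2 = (1 + s) ^ 2 - 4 * p) (hs : β < 1 + s) :
    deriv (fun y : ℝ => 2 * p * y ^ 2 /
      (1 + s * y - Real.sqrt ((1 + s * y) ^ 2 - 4 * p * y ^ 2))) 1 /
    (2 * p * 1 ^ 2 / (1 + s * 1 - Real.sqrt ((1 + s * 1) ^ 2 - 4 * p * 1 ^ 2)))
      = (β - 1) / β := by
  have hβne : β ≠ 0 := ne_of_gt hβpos
  have hD1 : (1 + s * 1) ^ 2 - 4 * p * 1 ^ 2 = β ^ 2 := by rw [hβ2]; ring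
  have hDne : (1 + s * 1) ^ 2 - 4 * p * 1 ^ 2 ≠ 0 := by
    rw [hD1]; positivity
  have hsq : Real.sqrt ((1 + s * 1) ^ 2 - 4 * p * 1 ^ 2) = β := by
    rw [hD1, Real.sqrt_sq hβpos.le]
  have h1 : HasDerivAt (fun y : ℝ => 1 + s * y) s 1 := by
    simpa using ((hasDerivAt_id (1:ℝ)).const_mul s).const_add 1
  have h2 : HasDerivAt (fun y : ℝ => (1 + s * y) ^ 2) (2 * (1 + s) * s) 1 := by
    have := h1.fun_pow 2
    simpa using this.congr_deriv (by push_cast; ring)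
  have h3 : HasDerivAt (fun y : ℝ => 4 * p * y ^ 2) (8 * p) 1 := by
    have := (hasDerivAt_pow 2 (1:ℝ)).const_mul (4 * p)
    simpa using this.congr_deriv (by push_cast; ring)
  have hD : HasDerivAt (fun y : ℝ => (1 + s * y) ^ 2 - 4 * p * y ^ 2)
      (2 * (1 + s) * s - 8 * p) 1 := h2.sub h3
  have hsqrtD : HasDerivAt (fun y : ℝ => Real.sqrt ((1 + s * y) ^ 2 - 4 * p * y ^ 2))
      (1 / (2 * β) * (2 * (1 + s) * s - 8 * p)) 1 := by
    have := (Real.hasDerivAt_sqrt hDne).comp 1 hD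
    rw [hsq] at this
    exact this
  have hden : HasDerivAt (fun y : ℝ => 1 + s * y - Real.sqrt ((1 + s * y) ^ 2 - 4 * p * y ^ 2))
      (s - 1 / (2 * β) * (2 * (1 + s) * s - 8 * p)) 1 := h1.sub hsqrtD
  have hnum : HasDerivAt (fun y : ℝ => 2 * p * y ^ 2) (4 * p) 1 := by
    have := (hasDerivAt_pow 2 (1:ℝ)).const_mul (2 * p)
    simpa using this.congr_deriv (by push_cast; ring)
  have hf1 : (1 + s * 1 - Real.sqrt ((1 + s * 1) ^ 2 - 4 * p * 1 ^ 2)) = 1 + s - β := by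
    rw [hsq]; ring
  have hf1pos : (0:ℝ) < 1 + s - β := by linarith
  have hf1ne : (1 + s * 1 - Real.sqrt ((1 + s * 1) ^ 2 - 4 * p * 1 ^ 2)) ≠ 0 := by
    rw [hf1]; exact ne_of_gt hf1pos
  have hq := hnum.fun_div hden hf1ne
  rw [hq.deriv, hf1]
  have hfne : (1 + s - β) ≠ 0 := ne_of_gt hf1pos
  have hfd : s - 1 / (2 * β) * (2 * (1 + s) * s - 8 * p) = (1 + s - β) * (1 + β) / β := by
    field_simp
    linear_combination 2 * hβ2
  rw [hfd]
  have hpne : p ≠ 0 := ne_of_gt hp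
  field_simp
  ring
theorem stmt10 (m n : ℕ) (hm : 0 < m) (hn : 0 < n)
    (α₁ : ℝ → ℝ)
    (hα : ∀ y : ℝ, α₁ y = 2 * m * n * y ^ 2 /
      (1 + ((m : ℝ) + n) * y - Real.sqrt ((1 + ((m : ℝ) + n) * y) ^ 2 - 4 * m * n * y ^ 2)))
    (β : ℝ) (hβ : β = Real.sqrt ((1 + (m : ℝ) + n) ^ 2 - 4 * m * n)) :
    deriv α₁ 1 / α₁ 1 = (β - 1) / β := by
  set s : ℝ := (m : ℝ) + n with hs
  set p : ℝ := (m : ℝ) * n with hp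
  have hm1 : (1:ℝ) ≤ m := by exact_mod_cast hm
  have hn1 : (1:ℝ) ≤ n := by exact_mod_cast hn
  have hppos : 0 < p := by positivity
  have hinner : (1 + (m : ℝ) + n) ^ 2 - 4 * m * n = (1 + s) ^ 2 - 4 * p := by
    rw [hs, hp]; ring
  have hinnerpos : (0:ℝ) < (1 + s) ^ 2 - 4 * p := by
    rw [hs, hp]; nlinarith [sq_nonneg ((m:ℝ) - n)]
  have hβpos : 0 < β := by
    rw [hβ, hinner]; exact Real.sqrt_pos.mpr hinnerpos
  have hβ2 : β ^ 2 = (1 + s) ^ 2 - 4 * p := by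
    rw [hβ, hinner, Real.sq_sqrt hinnerpos.le]
  have h1s : (0:ℝ) < 1 + s := by rw [hs]; positivity
  have hlt : β < 1 + s := by
    nlinarith [hβ2, hppos, hβpos]
  have hfun : α₁ = fun y : ℝ => 2 * p * y ^ 2 /
      (1 + s * y - Real.sqrt ((1 + s * y) ^ 2 - 4 * p * y ^ 2)) := by
    funext y
    rw [hα y]
    have e1 : 2 * (m:ℝ) * n * y ^ 2 = 2 * p * y ^ 2 := by rw [hp]; ring
    have e2 : 4 * (m:ℝ) * n * y ^ 2 = 4 * p * y ^ 2 := by rw [hp]; ring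
    rw [e1, e2]
  rw [hfun]
  have := aux s p β hppos hβpos hβ2 hlt
  rw [show (2 * p * (1:ℝ) ^ 2 / (1 + s * 1 - Real.sqrt ((1 + s * 1) ^ 2 - 4 * p * 1 ^ 2))) =
      (fun y : ℝ => 2 * p * y ^ 2 /
      (1 + s * y - Real.sqrt ((1 + s * y) ^ 2 - 4 * p * y ^ 2))) 1 from rfl] at this
  exact this
end
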